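/- arXiv:1812.02452 — 4 statements merged into one kernel-verified Lean document; each statement's English description precedes it below -/
import Mathlib

section
/- Let A be a k-linear abelian category, G a finite group, and H ≤ G. If the image of the index |G:H| in k is zero, then Triv_G ∘ Ind_H^G = 0, i.e., for every H-object X in A, the image of the natural morphism H^0(G, Ind_H^G X) → H_0(G, Ind_H^G X) is zero. -/
open CategoryTheory CategoryTheory.Limits

universe v u

/-- The category `Rep(G, A)` of `G`-objects in a category `A`, i.e. functors `G → A`
where the group `G` is viewed as a one-object category. -/
abbrev GRep (A : Type u) [Category.{v} A] (G : Type*) [Monoid G] := SingleObj G ⥤ A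

/-- The embedding `A → Rep(G, A)` equipping an object with the trivial `G`-action. -/
abbrev trivialRep (A : Type u) [Category.{v} A] (G : Type*) [Monoid G] :
    A ⥤ GRep A G :=
  Functor.const (SingleObj G)

/-- Restriction `Rep(G, A) → Rep(H, A)` along a monoid homomorphism `f : H →* G`. -/
def resHom (A : Type u) [Category.{v} A] {G H : Type*} [Monoid G] [Monoid H] (f : H →* G) :
    GRep A G ⥤ GRep A H :=
  (Functor.whiskeringLeft _ _ A).obj (SingleObj.mapHom H G f)


/-! Writing `T` for the trivial-action functor, every `G`-map `T V ⟶ Ind X` factors through the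
unit `T V ⟶ Ind (Res (T V))` of `Res ⊣ Ind`, so it suffices to treat `Ind (Res (T V))`. By the
other adjunction this object is a retract of the permutation object `⨁_{G/H} V`. A `G`-map from a
trivial object into `⨁_{G/H} V` has all its coordinates equal, and a `G`-map out of it is the same
on every summand, so their composite is `|G : H|` times a single term, hence zero. -/

local notation:max "ρ[" M "]" =>
  CategoryTheory.Functor.map (X := SingleObj.star _) (Y := SingleObj.star _) M

lemma GRep.map_mul {A : Type u} [Category.{v} A] {G : Type*} [Monoid G] (M : GRep A G)
    (g h : G) : ρ[M] (g * h) = ρ[M] h ≫ ρ[M] g :=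
  M.map_comp h g

lemma GRep.map_one {A : Type u} [Category.{v} A] {G : Type*} [Monoid G] (M : GRep A G) :
    ρ[M] 1 = 𝟙 _ :=
  M.map_id _

section PermRep

variable {A : Type u} [Category.{v} A] [Preadditive A] [HasFiniteBiproducts A]
  (G : Type*) [Group G] (X : Type*) [MulAction G X] [Finite X] (W : A)

noncomputable abbrev permRep : GRep A G where
  obj _ := ⨁ fun _ : X => W
  map g := biproduct.lift fun x => biproduct.π _ ((g⁻¹ : G) • x)
  map_id _ := biproduct.hom_ext _ _ fun x => by
    rw [biproduct.lift_π, SingleObj.id_as_one, inv_one, one_smul, Category.id_comp]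
  map_comp f g := biproduct.hom_ext _ _ fun x => by
    rw [biproduct.lift_π, Category.assoc, biproduct.lift_π, biproduct.lift_π,
      SingleObj.comp_as_mul, mul_inv_rev, mul_smul]

variable {G X W}

lemma permRep_map_π (g : G) (x : X) :
    ρ[permRep G X W] g ≫ biproduct.π _ x = biproduct.π _ (g⁻¹ • x) :=
  biproduct.lift_π _ _

lemma ι_permRep_map (g : G) (x : X) :
    biproduct.ι (fun _ : X => W) x ≫ ρ[permRep G X W] g =
      biproduct.ι (fun _ : X => W) (g • x) := by
  classical
  refine biproduct.hom_ext _ _ fun y => ?_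
  rw [Category.assoc, permRep_map_π, biproduct.ι_π, biproduct.ι_π]
  simp only [eq_inv_smul_iff]

variable {V V' : A}

lemma comp_π_smul_of_invariant {f : V ⟶ ⨁ fun _ : X => W}
    (hf : ∀ g : G, f ≫ ρ[permRep G X W] g = f) (g : G) (x : X) :
    f ≫ biproduct.π _ (g • x) = f ≫ biproduct.π _ x := by
  nth_rewrite 2 [← hf g⁻¹]
  rw [Category.assoc, permRep_map_π, inv_inv]

lemma ι_smul_comp_of_invariant {f : (⨁ fun _ : X => W) ⟶ V'}
    (hf : ∀ g : G, ρ[permRep G X W] g ≫ f = f) (g : G) (x : X) :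
    biproduct.ι (fun _ : X => W) (g • x) ≫ f = biproduct.ι (fun _ : X => W) x ≫ f := by
  rw [← ι_permRep_map, Category.assoc, hf]

theorem comp_eq_card_smul_of_invariant [MulAction.IsPretransitive G X]
    {f : V ⟶ ⨁ fun _ : X => W} {f' : (⨁ fun _ : X => W) ⟶ V'}
    (hf : ∀ g : G, f ≫ ρ[permRep G X W] g = f)
    (hf' : ∀ g : G, ρ[permRep G X W] g ≫ f' = f') (x : X) :
    f ≫ f' =
      Nat.card X • ((f ≫ biproduct.π _ x) ≫ (biproduct.ι (fun _ : X => W) x ≫ f')) := by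
  have := Fintype.ofFinite X
  have hsummand (y : X) :
      (f ≫ biproduct.π _ y) ≫ (biproduct.ι (fun _ : X => W) y ≫ f') =
        (f ≫ biproduct.π _ x) ≫ (biproduct.ι (fun _ : X => W) x ≫ f') := by
    obtain ⟨g, rfl⟩ := MulAction.exists_smul_eq G x y
    rw [comp_π_smul_of_invariant hf, ι_smul_comp_of_invariant hf']
  have htotal : ∑ y : X, biproduct.π (fun _ : X => W) y ≫ biproduct.ι (fun _ : X => W) y =
      𝟙 (⨁ fun _ : X => W) :=
    IsBilimit.total (biproduct.isBilimit _)
  calc f ≫ f' = f ≫ 𝟙 _ ≫ f' := by rw [Category.id_comp]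
    _ = ∑ y : X, (f ≫ biproduct.π _ y) ≫ (biproduct.ι (fun _ : X => W) y ≫ f') := by
        rw [← htotal, Preadditive.sum_comp, Preadditive.comp_sum]
        simp only [Category.assoc]
    _ = _ := by
        rw [Finset.sum_congr rfl fun y _ => hsummand y, Finset.sum_const, Finset.card_univ,
          Nat.card_eq_fintype_card]

theorem comp_eq_zero_of_card_eq_zero {k : Type*} [Semiring k] [Linear k A]
    [MulAction.IsPretransitive G X] [Nonempty X] (hX : (Nat.card X : k) = 0)
    (a : (trivialRep A G).obj V ⟶ permRep G X W) (b : permRep G X W ⟶ (trivialRep A G).obj V') :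
    a ≫ b = 0 := by
  ext : 2
  obtain ⟨x⟩ := ‹Nonempty X›
  have ha (g : G) :
      a.app (SingleObj.star G) ≫ ρ[permRep G X W] g = a.app (SingleObj.star G) := by
    simpa using (a.naturality (X := SingleObj.star G) (Y := SingleObj.star G) g).symm
  have hb (g : G) :
      ρ[permRep G X W] g ≫ b.app (SingleObj.star G) = b.app (SingleObj.star G) := by
    simpa using b.naturality (X := SingleObj.star G) (Y := SingleObj.star G) g
  refine (comp_eq_card_smul_of_invariant ha hb x).trans ?_
  rw [← Nat.cast_smul_eq_nsmul k, hX, zero_smul, NatTrans.app_zero]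

lemma CategoryTheory.Retract.trivialRep_comp_eq_zero {k : Type*} [Semiring k] [Linear k A]
    [MulAction.IsPretransitive G X] [Nonempty X] (hX : (Nat.card X : k) = 0) {M : GRep A G}
    (e : Retract M (permRep G X W)) (a : (trivialRep A G).obj V ⟶ M)
    (b : M ⟶ (trivialRep A G).obj V') :
    a ≫ b = 0 := by
  simpa using comp_eq_zero_of_card_eq_zero hX (a ≫ e.i) (e.r ≫ b)

end PermRep

section Induction

variable {A : Type u} [Category.{v} A] {G : Type*} [Group G] {H : Subgroup G}

variable (H) in
lemma resHom_trivialRep_app_comp_map {W : A} {M : GRep A G}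
    (f : (resHom A H.subtype).obj ((trivialRep A G).obj W) ⟶ (resHom A H.subtype).obj M)
    {h : G} (hh : h ∈ H) :
    f.app (SingleObj.star H) ≫ ρ[M] h = f.app (SingleObj.star H) :=
  (f.naturality (X := SingleObj.star H) (Y := SingleObj.star H) ⟨h, hh⟩).symm.trans
    (Category.id_comp _)

lemma GRep.comp_map_eq_of_mk_eq {W : A} {M : GRep A G} {u : W ⟶ M.obj (SingleObj.star G)}
    (hu : ∀ h ∈ H, u ≫ ρ[M] h = u) {x y : G} (hxy : (x : G ⧸ H) = y) :
    u ≫ ρ[M] x = u ≫ ρ[M] y := by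
  rw [← mul_inv_cancel_left x y, GRep.map_mul, reassoc_of% hu _ (QuotientGroup.eq.mp hxy)]

noncomputable def CategoryTheory.Adjunction.unitTrivialRep {ind : GRep A H ⥤ GRep A G}
    (adj : ind ⊣ resHom A H.subtype) (W : A) :
    W ⟶ (ind.obj ((resHom A H.subtype).obj ((trivialRep A G).obj W))).obj (SingleObj.star G) :=
  (adj.unit.app ((resHom A H.subtype).obj ((trivialRep A G).obj W))).app (SingleObj.star H)

lemma CategoryTheory.Adjunction.unitTrivialRep_comp_map_of_mem {ind : GRep A H ⥤ GRep A G}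
    (adj : ind ⊣ resHom A H.subtype) (W : A) {h : G} (hh : h ∈ H) :
    adj.unitTrivialRep W ≫ ρ[_] h = adj.unitTrivialRep W :=
  resHom_trivialRep_app_comp_map H _ hh

variable [Preadditive A] [HasFiniteBiproducts A] [H.FiniteIndex]

noncomputable def permRepDesc {W : A} (M : GRep A G) (u : W ⟶ M.obj (SingleObj.star G))
    (hu : ∀ h ∈ H, u ≫ ρ[M] h = u) :
    permRep G (G ⧸ H) W ⟶ M :=
  SingleObj.natTrans (biproduct.desc fun c => u ≫ ρ[M] c.out) fun g => by
    refine biproduct.hom_ext' _ _ fun c => ?_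
    rw [← Category.assoc, ι_permRep_map, biproduct.ι_desc, biproduct.ι_desc_assoc,
      Category.assoc, ← GRep.map_mul]
    exact GRep.comp_map_eq_of_mk_eq hu
      (by rw [QuotientGroup.out_eq', ← smul_eq_mul, MulAction.Quotient.mk_smul_out])

lemma ι_permRepDesc_app {W : A} (M : GRep A G) (u : W ⟶ M.obj (SingleObj.star G))
    (hu : ∀ h ∈ H, u ≫ ρ[M] h = u) (c : G ⧸ H) :
    biproduct.ι _ c ≫ (permRepDesc M u hu).app (SingleObj.star G) = u ≫ ρ[M] c.out :=
  biproduct.ι_desc _ _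

variable (H) in
noncomputable def cosetInclusion (W : A) :
    (resHom A H.subtype).obj ((trivialRep A G).obj W) ⟶
      (resHom A H.subtype).obj (permRep G (G ⧸ H) W) :=
  SingleObj.natTrans (biproduct.ι (fun _ : G ⧸ H => W) ((1 : G) : G ⧸ H)) fun h => by
    have hfix : (h : G) • ((1 : G) : G ⧸ H) = (1 : G) := by
      rw [← MulAction.mem_stabilizer_iff, MulAction.stabilizer_quotient]
      exact h.2
    change 𝟙 W ≫ _ = _ ≫ ρ[permRep G (G ⧸ H) W] (h : G)
    rw [Category.id_comp, ι_permRep_map, hfix]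

noncomputable def CategoryTheory.Adjunction.indResTrivialRetract {ind : GRep A H ⥤ GRep A G}
    (adj : ind ⊣ resHom A H.subtype) (W : A) :
    Retract (ind.obj ((resHom A H.subtype).obj ((trivialRep A G).obj W)))
      (permRep G (G ⧸ H) W) where
  i := (adj.homEquiv _ _).symm (cosetInclusion H W)
  r := permRepDesc _ (adj.unitTrivialRep W) fun _ => adj.unitTrivialRep_comp_map_of_mem W
  retract := by
    -- both sides are adjoint to the unit, because the representative of the coset `H` lies in `H`
    apply (adj.homEquiv _ _).injective
    rw [adj.homEquiv_naturality_right, Equiv.apply_symm_apply, adj.homEquiv_id]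
    ext ⟨⟩
    change _ = adj.unitTrivialRep W
    refine (ι_permRepDesc_app _ _ (fun _ => adj.unitTrivialRep_comp_map_of_mem W) _).trans ?_
    rw [GRep.comp_map_eq_of_mk_eq (fun _ => adj.unitTrivialRep_comp_map_of_mem W)
      (QuotientGroup.out_eq' _), GRep.map_one, Category.comp_id]

end Induction

/-- Let `A` be a `k`-linear abelian category, `G` a finite group and `H ≤ G`.
If the image of the index `|G : H|` in `k` is zero, then `Triv_G ∘ Ind_H^G = 0`:
for every `H`-object `X` in `A`, the composite of the canonical morphisms
`H^0(G, Ind_H^G X) → Ind_H^G X → H_0(G, Ind_H^G X)` (whose image defines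
`Triv_G(Ind_H^G X)`) is zero. -/
theorem stmt_5 {k : Type*} [Field k] {A : Type u} [Category.{v} A] [Abelian A] [Linear k A]
    (G : Type*) [Group G] [Finite G] (H : Subgroup G)
    (hindex : ((H.index : k) = 0))
    (invG : GRep A G ⥤ A) (adjInvG : trivialRep A G ⊣ invG)
    (coinvG : GRep A G ⥤ A) (adjCoinvG : coinvG ⊣ trivialRep A G)
    (ind : GRep A H ⥤ GRep A G)
    (adj₁ : ind ⊣ resHom A H.subtype) (adj₂ : resHom A H.subtype ⊣ ind) :
    ∀ X : GRep A H,
      adjInvG.counit.app (ind.obj X) ≫ adjCoinvG.unit.app (ind.obj X) = 0 := by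
  intro X
  have := Abelian.hasFiniteBiproducts (C := A)
  rw [← (adj₂.homEquiv _ _).apply_symm_apply (adjInvG.counit.app _), adj₂.homEquiv_unit,
    Category.assoc]
  exact (adj₁.indResTrivialRetract _).trivialRep_comp_eq_zero hindex _ _
end

section
/- Let A be a k-linear abelian category, G a finite group, and H ≤ G with |G:H| invertible in k. Then the functor Triv_G is a direct summand of Triv_H ∘ Res^G_H as functors Rep(G,A) → A. -/
open CategoryTheory CategoryTheory.Limits

universe v u

/-!
Restricting `G`-invariants to `H`-invariants and then applying the corestriction
`x ↦ [G : H]⁻¹ • ∑_{gH ∈ G ⧸ H} g • x` is the identity of `H⁰(G, X)`. Both maps commute with the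
canonical maps `H⁰ → H₀`, through the analogous maps on coinvariants. As `Triv` is the image of the
canonical map and strong epimorphisms lift against monomorphisms, the maps descend to `Triv_G`
and `Triv_H ∘ Res`, where they still compose to the identity because `H⁰(G, X) → Triv_G X` is epi.
-/

namespace CategoryTheory.Retract

variable {C : Type*} [Category C]

noncomputable def ofFactorizations {P P' I I' Q Q' : C} {f : P ⟶ Q} {f' : P' ⟶ Q'}
    {p : P ⟶ I} {i : I ⟶ Q} {p' : P' ⟶ I'} {i' : I' ⟶ Q'}
    [StrongEpi p] [StrongEpi p'] [Mono i] [Mono i'] (hf : p ≫ i = f) (hf' : p' ≫ i' = f')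
    (e : Retract P P') {t : Q ⟶ Q'} {m : Q' ⟶ Q}
    (ht : e.i ≫ f' = f ≫ t) (hm : e.r ≫ f = f' ≫ m) : Retract I I' :=
  have sq₁ : CommSq (e.i ≫ p') p i' (i ≫ t) := ⟨by simp [hf', ht, ← hf]⟩
  have sq₂ : CommSq (e.r ≫ p) p' i (i' ≫ m) := ⟨by simp [hf, hm, ← hf']⟩
  { i := sq₁.lift
    r := sq₂.lift
    retract := by
      rw [← cancel_epi p, sq₁.fac_left_assoc, Category.assoc, sq₂.fac_left, e.retract_assoc,
        Category.comp_id] }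

end CategoryTheory.Retract

lemma QuotientGroup.smul_eq_mk_mul_out {G : Type*} [Group G] {H : Subgroup G} (g : G)
    (q : G ⧸ H) : g • q = QuotientGroup.mk (g * q.out) := by
  conv_lhs => rw [← QuotientGroup.out_eq' q]
  rfl

namespace GRep

section

variable {A : Type u} [Category.{v} A] {M : Type*} [Monoid M]

abbrev act (X : GRep A M) (g : M) : X.obj (SingleObj.star M) ⟶ X.obj (SingleObj.star M) :=
  X.map (g : SingleObj.star M ⟶ SingleObj.star M)

lemma act_mul (X : GRep A M) (g h : M) : act X (g * h) = act X h ≫ act X g :=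
  X.map_comp h g

def fromTrivial (X : GRep A M) {a : A} (f : a ⟶ X.obj (SingleObj.star M))
    (hf : ∀ g, f ≫ act X g = f) : (trivialRep A M).obj a ⟶ X where
  app _ := f
  naturality _ _ g := by simpa using (hf g).symm

def toTrivial (X : GRep A M) {a : A} (f : X.obj (SingleObj.star M) ⟶ a)
    (hf : ∀ g, act X g ≫ f = f) : X ⟶ (trivialRep A M).obj a where
  app _ := f
  naturality _ _ g := by simpa using hf g

section Invariants

variable {inv : GRep A M ⥤ A} (adj : trivialRep A M ⊣ inv)

def ev (X : GRep A M) : inv.obj X ⟶ X.obj (SingleObj.star M) :=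
  (adj.counit.app X).app (SingleObj.star M)

lemma ev_act (X : GRep A M) (g : M) : ev adj X ≫ act X g = ev adj X := by
  simpa [ev] using ((adj.counit.app X).naturality g).symm

lemma ev_naturality {X Y : GRep A M} (f : X ⟶ Y) :
    inv.map f ≫ ev adj Y = ev adj X ≫ f.app (SingleObj.star M) :=
  NatTrans.congr_app (adj.counit.naturality f) (SingleObj.star M)

def lift (X : GRep A M) {a : A} (f : a ⟶ X.obj (SingleObj.star M))
    (hf : ∀ g, f ≫ act X g = f) : a ⟶ inv.obj X :=
  adj.homEquiv a X (fromTrivial X f hf)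

lemma lift_ev (X : GRep A M) {a : A} (f : a ⟶ X.obj (SingleObj.star M))
    (hf : ∀ g, f ≫ act X g = f) : lift adj X f hf ≫ ev adj X = f := by
  have := NatTrans.congr_app ((adj.homEquiv a X).symm_apply_apply (fromTrivial X f hf))
    (SingleObj.star M)
  rwa [Adjunction.homEquiv_counit] at this

lemma hom_ext_ev {X : GRep A M} {a : A} {f g : a ⟶ inv.obj X}
    (h : f ≫ ev adj X = g ≫ ev adj X) : f = g :=
  (adj.homEquiv a X).symm.injective <| by
    ext ⟨⟩; rw [Adjunction.homEquiv_counit, Adjunction.homEquiv_counit]; exact h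

end Invariants

section Coinvariants

variable {coinv : GRep A M ⥤ A} (adj : coinv ⊣ trivialRep A M)

def coev (X : GRep A M) : X.obj (SingleObj.star M) ⟶ coinv.obj X :=
  (adj.unit.app X).app (SingleObj.star M)

lemma act_coev (X : GRep A M) (g : M) : act X g ≫ coev adj X = coev adj X := by
  simp [coev]

lemma coev_naturality {X Y : GRep A M} (f : X ⟶ Y) :
    f.app (SingleObj.star M) ≫ coev adj Y = coev adj X ≫ coinv.map f :=
  NatTrans.congr_app (adj.unit.naturality f) (SingleObj.star M)

def desc (X : GRep A M) {a : A} (f : X.obj (SingleObj.star M) ⟶ a)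
    (hf : ∀ g, act X g ≫ f = f) : coinv.obj X ⟶ a :=
  (adj.homEquiv X a).symm (toTrivial X f hf)

lemma coev_desc (X : GRep A M) {a : A} (f : X.obj (SingleObj.star M) ⟶ a)
    (hf : ∀ g, act X g ≫ f = f) : coev adj X ≫ desc adj X f hf = f := by
  have := NatTrans.congr_app ((adj.homEquiv X a).apply_symm_apply (toTrivial X f hf))
    (SingleObj.star M)
  rwa [Adjunction.homEquiv_unit] at this

lemma hom_ext_coev {X : GRep A M} {a : A} {f g : coinv.obj X ⟶ a}
    (h : coev adj X ≫ f = coev adj X ≫ g) : f = g :=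
  (adj.homEquiv X a).injective <| by
    ext ⟨⟩; rw [Adjunction.homEquiv_unit, Adjunction.homEquiv_unit]; exact h

end Coinvariants

/-- The canonical map `H⁰ → H₀`, whose image is `Triv`. -/
@[simps]
def invToCoinv {inv coinv : GRep A M ⥤ A} (adjInv : trivialRep A M ⊣ inv)
    (adjCoinv : coinv ⊣ trivialRep A M) : inv ⟶ coinv where
  app X := ev adjInv X ≫ coev adjCoinv X
  naturality _ _ f := by
    rw [← Category.assoc, ev_naturality, Category.assoc, coev_naturality, Category.assoc]

/- The underlying objects of `Res X` and `X` agree only up to unfolding `resHom`, which defeats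
rewriting; the variants below of `ev`, `lift`, `coev`, `desc` for `Res X` are typed with the
underlying object of `X`. -/

section Restriction

variable {N : Type*} [Monoid N] (φ : N →* M)

section Invariants

variable {inv : GRep A N ⥤ A} (adj : trivialRep A N ⊣ inv)

def evRes (X : GRep A M) : inv.obj ((resHom A φ).obj X) ⟶ X.obj (SingleObj.star M) :=
  ev adj ((resHom A φ).obj X)

lemma evRes_act (X : GRep A M) (n : N) : evRes φ adj X ≫ act X (φ n) = evRes φ adj X :=
  ev_act adj ((resHom A φ).obj X) n

lemma evRes_naturality {X Y : GRep A M} (f : X ⟶ Y) :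
    inv.map ((resHom A φ).map f) ≫ evRes φ adj Y = evRes φ adj X ≫ f.app (SingleObj.star M) :=
  ev_naturality adj ((resHom A φ).map f)

def liftRes (X : GRep A M) {a : A} (f : a ⟶ X.obj (SingleObj.star M))
    (hf : ∀ n, f ≫ act X (φ n) = f) : a ⟶ inv.obj ((resHom A φ).obj X) :=
  lift adj ((resHom A φ).obj X) f hf

lemma liftRes_evRes (X : GRep A M) {a : A} (f : a ⟶ X.obj (SingleObj.star M))
    (hf : ∀ n, f ≫ act X (φ n) = f) : liftRes φ adj X f hf ≫ evRes φ adj X = f :=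
  lift_ev adj ((resHom A φ).obj X) f hf

lemma hom_ext_evRes {X : GRep A M} {a : A} {f g : a ⟶ inv.obj ((resHom A φ).obj X)}
    (h : f ≫ evRes φ adj X = g ≫ evRes φ adj X) : f = g :=
  hom_ext_ev adj h

end Invariants

section Coinvariants

variable {coinv : GRep A N ⥤ A} (adj : coinv ⊣ trivialRep A N)

def coevRes (X : GRep A M) : X.obj (SingleObj.star M) ⟶ coinv.obj ((resHom A φ).obj X) :=
  coev adj ((resHom A φ).obj X)

lemma act_coevRes (X : GRep A M) (n : N) : act X (φ n) ≫ coevRes φ adj X = coevRes φ adj X :=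
  act_coev adj ((resHom A φ).obj X) n

lemma coevRes_naturality {X Y : GRep A M} (f : X ⟶ Y) :
    f.app (SingleObj.star M) ≫ coevRes φ adj Y =
      coevRes φ adj X ≫ coinv.map ((resHom A φ).map f) :=
  coev_naturality adj ((resHom A φ).map f)

def descRes (X : GRep A M) {a : A} (f : X.obj (SingleObj.star M) ⟶ a)
    (hf : ∀ n, act X (φ n) ≫ f = f) : coinv.obj ((resHom A φ).obj X) ⟶ a :=
  desc adj ((resHom A φ).obj X) f hf

lemma coevRes_descRes (X : GRep A M) {a : A} (f : X.obj (SingleObj.star M) ⟶ a)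
    (hf : ∀ n, act X (φ n) ≫ f = f) : coevRes φ adj X ≫ descRes φ adj X f hf = f :=
  coev_desc adj ((resHom A φ).obj X) f hf

lemma hom_ext_coevRes {X : GRep A M} {a : A} {f g : coinv.obj ((resHom A φ).obj X) ⟶ a}
    (h : coevRes φ adj X ≫ f = coevRes φ adj X ≫ g) : f = g :=
  hom_ext_coev adj h

end Coinvariants

lemma invToCoinv_app_res {inv coinv : GRep A N ⥤ A} (adjInv : trivialRep A N ⊣ inv)
    (adjCoinv : coinv ⊣ trivialRep A N) (X : GRep A M) :
    (invToCoinv adjInv adjCoinv).app ((resHom A φ).obj X) =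
      evRes φ adjInv X ≫ coevRes φ adjCoinv X :=
  rfl

end Restriction

end

section CosetRepresentatives

variable {A : Type u} [Category.{v} A] {G : Type*} [Group G] (H : Subgroup G) {X : GRep A G}

lemma comp_act_out_mk {a : A} {e : a ⟶ X.obj (SingleObj.star G)} (he : ∀ h : H, e ≫ act X h = e)
    (g : G) : e ≫ act X (QuotientGroup.mk g : G ⧸ H).out = e ≫ act X g := by
  obtain ⟨h, hh⟩ := QuotientGroup.mk_out_eq_mul H g
  rw [hh, act_mul, ← Category.assoc, he]

lemma act_out_inv_mk_comp {a : A} {e : X.obj (SingleObj.star G) ⟶ a}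
    (he : ∀ h : H, act X h ≫ e = e) (g : G) :
    act X (QuotientGroup.mk g : G ⧸ H).out⁻¹ ≫ e = act X g⁻¹ ≫ e := by
  obtain ⟨h, hh⟩ := QuotientGroup.mk_out_eq_mul H g
  rw [hh, mul_inv_rev, act_mul, Category.assoc, ← Subgroup.coe_inv, he]

end CosetRepresentatives

section Sums

variable {A : Type u} [Category.{v} A] [Preadditive A]

section

variable {M : Type*} [Monoid M] {X : GRep A M} {ι : Type*} [Fintype ι] (g : ι → M)

lemma comp_sum_act_of_invariant {a : A} {e : a ⟶ X.obj (SingleObj.star M)}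
    (he : ∀ g, e ≫ act X g = e) : e ≫ ∑ i, act X (g i) = Fintype.card ι • e := by
  simp [Preadditive.comp_sum, he]

lemma sum_act_comp_of_invariant {a : A} {e : X.obj (SingleObj.star M) ⟶ a}
    (he : ∀ g, act X g ≫ e = e) : (∑ i, act X (g i)) ≫ e = Fintype.card ι • e := by
  simp [Preadditive.sum_comp, he]

lemma sum_act_naturality {Y : GRep A M} (φ : X ⟶ Y) :
    (∑ i, act X (g i)) ≫ φ.app (SingleObj.star M) =
      φ.app (SingleObj.star M) ≫ ∑ i, act Y (g i) := by
  simp only [Preadditive.sum_comp, Preadditive.comp_sum, act, φ.naturality]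

end

variable {G : Type*} [Group G] (H : Subgroup G) [Fintype (G ⧸ H)] {X : GRep A G}

lemma comp_sum_act_out_act {a : A} {e : a ⟶ X.obj (SingleObj.star G)}
    (he : ∀ h : H, e ≫ act X h = e) (g : G) :
    e ≫ (∑ q : G ⧸ H, act X q.out) ≫ act X g = e ≫ ∑ q : G ⧸ H, act X q.out := by
  simp only [Preadditive.sum_comp, Preadditive.comp_sum]
  refine Fintype.sum_equiv (MulAction.toPerm g) _ _ fun q => ?_
  rw [MulAction.toPerm_apply, QuotientGroup.smul_eq_mk_mul_out, comp_act_out_mk H he, act_mul]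

lemma act_sum_act_out_inv_comp {a : A} {e : X.obj (SingleObj.star G) ⟶ a}
    (he : ∀ h : H, act X h ≫ e = e) (g : G) :
    act X g ≫ (∑ q : G ⧸ H, act X q.out⁻¹) ≫ e = (∑ q : G ⧸ H, act X q.out⁻¹) ≫ e := by
  simp only [Preadditive.sum_comp, Preadditive.comp_sum]
  refine Fintype.sum_equiv (MulAction.toPerm g⁻¹) _ _ fun q => ?_
  rw [MulAction.toPerm_apply, QuotientGroup.smul_eq_mk_mul_out, act_out_inv_mk_comp H he,
    mul_inv_rev, inv_inv, act_mul, Category.assoc]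

end Sums

section Transfer

variable {k : Type*} [Semiring k] {A : Type u} [Category.{v} A] [Preadditive A] [Linear k A]
  {G : Type*} [Group G] {H : Subgroup G} [Fintype (G ⧸ H)]
  {invG coinvG : GRep A G ⥤ A} {invH coinvH : GRep A H ⥤ A}
  (adjInvG : trivialRep A G ⊣ invG) (adjCoinvG : coinvG ⊣ trivialRep A G)
  (adjInvH : trivialRep A H ⊣ invH) (adjCoinvH : coinvH ⊣ trivialRep A H)

lemma inv_index_smul_card_smul (hindex : IsUnit (H.index : k)) {a b : A} (f : a ⟶ b) :
    (↑hindex.unit⁻¹ : k) • (Fintype.card (G ⧸ H) • f) = f := by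
  rw [← Nat.card_eq_fintype_card, ← Subgroup.index_eq_card, ← Nat.cast_smul_eq_nsmul k, smul_smul,
    hindex.val_inv_mul, one_smul]

@[simps]
def invariantsRes : invG ⟶ resHom A H.subtype ⋙ invH where
  app X := liftRes H.subtype adjInvH X (ev adjInvG X) fun h => ev_act adjInvG X (H.subtype h)
  naturality X Y f := hom_ext_evRes H.subtype adjInvH <| by
    rw [Category.assoc, liftRes_evRes, ev_naturality, Functor.comp_map, Category.assoc,
      evRes_naturality, ← Category.assoc, liftRes_evRes]

/-- The corestriction, normalized by `[G : H]⁻¹` so that it retracts `invariantsRes`; likewise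
`coinvariantsRes` below. -/
@[simps]
noncomputable def invariantsCores (hindex : IsUnit (H.index : k)) :
    resHom A H.subtype ⋙ invH ⟶ invG where
  app X := lift adjInvG X
    ((↑hindex.unit⁻¹ : k) • (evRes H.subtype adjInvH X ≫ ∑ q : G ⧸ H, act X q.out)) fun g => by
      rw [Linear.smul_comp, Category.assoc,
        comp_sum_act_out_act H (fun h => evRes_act H.subtype adjInvH X h)]
  naturality X Y f := hom_ext_ev adjInvG <| by
    rw [Category.assoc, lift_ev, Category.assoc, ev_naturality, ← Category.assoc, lift_ev,
      Functor.comp_map, Linear.comp_smul, Linear.smul_comp, Category.assoc, sum_act_naturality,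
      ← Category.assoc (invH.map _), evRes_naturality, Category.assoc]

@[simps]
def coinvariantsCores : resHom A H.subtype ⋙ coinvH ⟶ coinvG where
  app X := descRes H.subtype adjCoinvH X (coev adjCoinvG X) fun h =>
    act_coev adjCoinvG X (H.subtype h)
  naturality X Y f := hom_ext_coevRes H.subtype adjCoinvH <| by
    rw [Functor.comp_map, ← Category.assoc, ← coevRes_naturality, Category.assoc,
      coevRes_descRes, ← Category.assoc, coevRes_descRes]
    exact coev_naturality adjCoinvG f

@[simps]
noncomputable def coinvariantsRes (hindex : IsUnit (H.index : k)) :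
    coinvG ⟶ resHom A H.subtype ⋙ coinvH where
  app X := desc adjCoinvG X
    ((↑hindex.unit⁻¹ : k) • ((∑ q : G ⧸ H, act X q.out⁻¹) ≫ coevRes H.subtype adjCoinvH X))
    fun g => by
      rw [Linear.comp_smul,
        act_sum_act_out_inv_comp H (fun h => act_coevRes H.subtype adjCoinvH X h)]
  naturality X Y f := hom_ext_coev adjCoinvG <| by
    rw [← Category.assoc, ← coev_naturality, Category.assoc, coev_desc, ← Category.assoc,
      coev_desc, Functor.comp_map, Linear.comp_smul, Linear.smul_comp, Category.assoc,
      ← coevRes_naturality, ← Category.assoc, ← Category.assoc, sum_act_naturality]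

noncomputable def invariantsRetract (hindex : IsUnit (H.index : k)) :
    Retract invG (resHom A H.subtype ⋙ invH) where
  i := invariantsRes adjInvG adjInvH
  r := invariantsCores adjInvG adjInvH hindex
  retract := by
    ext X
    refine hom_ext_ev adjInvG ?_
    rw [NatTrans.comp_app, Category.assoc, invariantsCores_app, lift_ev, Linear.comp_smul,
      ← Category.assoc, invariantsRes_app, liftRes_evRes,
      comp_sum_act_of_invariant _ (ev_act adjInvG X), inv_index_smul_card_smul, NatTrans.id_app,
      Category.id_comp]

lemma invariantsRes_comp_invToCoinv (hindex : IsUnit (H.index : k)) :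
    invariantsRes adjInvG adjInvH ≫
        Functor.whiskerLeft (resHom A H.subtype) (invToCoinv adjInvH adjCoinvH) =
      invToCoinv adjInvG adjCoinvG ≫ coinvariantsRes adjCoinvG adjCoinvH hindex := by
  ext X
  rw [NatTrans.comp_app, NatTrans.comp_app, Functor.whiskerLeft_app, invToCoinv_app_res,
    ← Category.assoc, invariantsRes_app, liftRes_evRes, invToCoinv_app, Category.assoc,
    coinvariantsRes_app, coev_desc, Linear.comp_smul, ← Category.assoc,
    comp_sum_act_of_invariant _ (ev_act adjInvG X), Preadditive.nsmul_comp,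
    inv_index_smul_card_smul]

lemma invariantsCores_comp_invToCoinv (hindex : IsUnit (H.index : k)) :
    invariantsCores adjInvG adjInvH hindex ≫ invToCoinv adjInvG adjCoinvG =
      Functor.whiskerLeft (resHom A H.subtype) (invToCoinv adjInvH adjCoinvH) ≫
        coinvariantsCores adjCoinvG adjCoinvH := by
  ext X
  rw [NatTrans.comp_app, NatTrans.comp_app, Functor.whiskerLeft_app, invToCoinv_app_res,
    invToCoinv_app, ← Category.assoc, invariantsCores_app, lift_ev, Category.assoc,
    coinvariantsCores_app, coevRes_descRes, Linear.smul_comp, Category.assoc,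
    sum_act_comp_of_invariant _ (act_coev adjCoinvG X), Preadditive.comp_nsmul,
    inv_index_smul_card_smul]

end Transfer

end GRep

/-- Let `A` be a `k`-linear abelian category, `G` a finite group, `H ≤ G` with
`|G : H|` invertible in `k`.  Given the invariants and coinvariants functors for `G`
and `H`, and the functors `Triv_G`, `Triv_H` exhibited as the images of the canonical
natural transformations `H^0 → H_0` (an epi onto `Triv` followed by a mono into the
coinvariants, composing to the canonical map), the functor `Triv_G` is a direct summand
of `Triv_H ∘ Res^G_H` as functors `Rep(G,A) → A`. -/
theorem stmt_6 {k : Type*} [Field k] {A : Type u} [Category.{v} A] [Abelian A] [Linear k A]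
    (G : Type*) [Group G] [Finite G] (H : Subgroup G)
    (hindex : IsUnit (H.index : k))
    (invG : GRep A G ⥤ A) (adjInvG : trivialRep A G ⊣ invG)
    (coinvG : GRep A G ⥤ A) (adjCoinvG : coinvG ⊣ trivialRep A G)
    (invH : GRep A H ⥤ A) (adjInvH : trivialRep A H ⊣ invH)
    (coinvH : GRep A H ⥤ A) (adjCoinvH : coinvH ⊣ trivialRep A H)
    (TrivG : GRep A G ⥤ A) (pG : invG ⟶ TrivG) (iG : TrivG ⟶ coinvG)
    (hpG : ∀ X, Epi (pG.app X)) (hiG : ∀ X, Mono (iG.app X))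
    (hfacG : ∀ X, pG.app X ≫ iG.app X =
      (adjInvG.counit.app X ≫ adjCoinvG.unit.app X).app (SingleObj.star G))
    (TrivH : GRep A H ⥤ A) (pH : invH ⟶ TrivH) (iH : TrivH ⟶ coinvH)
    (hpH : ∀ X, Epi (pH.app X)) (hiH : ∀ X, Mono (iH.app X))
    (hfacH : ∀ X, pH.app X ≫ iH.app X =
      (adjInvH.counit.app X ≫ adjCoinvH.unit.app X).app (SingleObj.star H)) :
    ∃ (s : TrivG ⟶ resHom A H.subtype ⋙ TrivH) (r : resHom A H.subtype ⋙ TrivH ⟶ TrivG),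
      s ≫ r = 𝟙 TrivG := by
  let res := resHom A H.subtype
  have : Fintype (G ⧸ H) := Fintype.ofFinite _
  have : ∀ X, Epi ((Functor.whiskerLeft res pH).app X) := fun X => hpH (res.obj X)
  have : ∀ X, Mono ((Functor.whiskerLeft res iH).app X) := fun X => hiH (res.obj X)
  have : Epi pG := NatTrans.epi_of_epi_app pG
  have : Epi (Functor.whiskerLeft res pH) := NatTrans.epi_of_epi_app _
  have : StrongEpi pG := strongEpi_of_epi pG
  have : StrongEpi (Functor.whiskerLeft res pH) := strongEpi_of_epi _
  have : Mono iG := NatTrans.mono_of_mono_app iG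
  have : Mono (Functor.whiskerLeft res iH) := NatTrans.mono_of_mono_app _
  have hG : pG ≫ iG = GRep.invToCoinv adjInvG adjCoinvG := by
    ext X
    exact hfacG X
  have hH : Functor.whiskerLeft res pH ≫ Functor.whiskerLeft res iH =
      Functor.whiskerLeft res (GRep.invToCoinv adjInvH adjCoinvH) := by
    ext X
    exact hfacH _
  let e := Retract.ofFactorizations hG hH (GRep.invariantsRetract adjInvG adjInvH hindex)
    (GRep.invariantsRes_comp_invToCoinv adjInvG adjCoinvG adjInvH adjCoinvH hindex)
    (GRep.invariantsCores_comp_invToCoinv adjInvG adjCoinvG adjInvH adjCoinvH hindex)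
  exact ⟨e.i, e.r, e.retract⟩
end

section
/- Let k be a splitting field for the finite group G and let M, N be indecomposable finite-dimensional kG-modules. If the images of M and N in the semisimplification of Rep_k G (the quotient by the ideal of negligible morphisms) are isomorphic and nonzero, then M ≅ N. -/
open CategoryTheory

universe u

/-- A morphism `f : M ⟶ N` of finite dimensional `G`-representations is negligible if
`tr (f ≫ g) = 0` for every `g : N ⟶ M`.  The semisimplification of `Rep_k G` is the
quotient of `FDRep k G` by the tensor ideal of negligible morphisms; the image of an
object `M` in the semisimplification is zero iff `𝟙 M` is negligible, and the images of
`M` and `N` are isomorphic via `f`, `g` iff `f ≫ g - 𝟙 M` and `g ≫ f - 𝟙 N` are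
negligible. -/
def Negligible {k G : Type u} [Field k] [Monoid G] {M N : FDRep k G} (f : M ⟶ N) : Prop :=
  ∀ g : N ⟶ M, LinearMap.trace k M ((f ≫ g).hom.hom.hom) = 0

/-- An object of `FDRep k G` is indecomposable if it is nonzero and has no nontrivial
idempotent endomorphisms. -/
def Indec {k G : Type u} [Field k] [Monoid G] (M : FDRep k G) : Prop :=
  ¬ Limits.IsZero M ∧ ∀ f : M ⟶ M, f ≫ f = f → f = 0 ∨ f = 𝟙 M

/-- `k` is a splitting field for `G`: every indecomposable `kG`-module is absolutely
indecomposable, i.e. the endomorphism algebra of every indecomposable is local with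
residue field `k` (every endomorphism is a scalar plus a non-unit). -/
def IsSplittingFieldFor (k G : Type u) [Field k] [Monoid G] : Prop :=
  ∀ M : FDRep k G, Indec M →
    ∀ f : CategoryTheory.End M, ∃ c : k, ¬ IsUnit (f - algebraMap k (CategoryTheory.End M) c)

/-! `End M` is a finite-dimensional algebra without nontrivial idempotents, so by Fitting's lemma
each of its elements is a unit or nilpotent, and non-units have trace zero. Were `f ≫ g`
not invertible, neither would be any `(f ≫ g) ≫ h`, so `tr h = tr ((f ≫ g) ≫ h) = 0` for all `h`
and `𝟙 M` would be negligible. Hence `f` is a split monomorphism into the indecomposable `N`,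
whose only idempotents `0` and `𝟙 N` force `f` to be an isomorphism. -/

theorem isUnit_or_isNilpotent_of_forall_isIdempotentElem {A : Type*} [Ring A] [IsArtinianRing A]
    (hA : ∀ e : A, IsIdempotentElem e → e = 0 ∨ e = 1) (a : A) : IsUnit a ∨ IsNilpotent a := by
  obtain ⟨n, hcompl, hn⟩ := ((LinearMap.mulRight A a).eventually_isCompl_ker_pow_range_pow.and
    (Filter.eventually_ge_atTop 1)).exists
  rw [LinearMap.pow_mulRight] at hcompl
  -- `A` splits into the left ideals `ker (· * a ^ n)` and `A * a ^ n`; the first component of `1`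
  -- is an idempotent, and `a` is nilpotent or a unit according as it is `1` or `0`.
  obtain ⟨x, hx, y, ⟨z, rfl⟩, hxy⟩ := Submodule.mem_sup.mp (hcompl.codisjoint.eq_top ▸
    Submodule.mem_top (x := (1 : A)))
  simp only [LinearMap.mem_ker, LinearMap.mulRight_apply] at hx hxy
  have hx_idem : IsIdempotentElem x := by
    have hker : x - x * x ∈ LinearMap.ker (LinearMap.mulRight A (a ^ n)) := by
      simp [sub_mul, mul_assoc, hx]
    have hrange : x - x * x ∈ LinearMap.range (LinearMap.mulRight A (a ^ n)) :=
      ⟨x * z, by simp [mul_assoc, eq_sub_of_add_eq' hxy, mul_sub]⟩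
    exact (sub_eq_zero.mp (Submodule.disjoint_def.mp hcompl.disjoint _ hker hrange)).symm
  rcases hA x hx_idem with rfl | rfl
  · rw [zero_add] at hxy
    exact .inl <| (isUnit_pow_iff (by omega)).mp (.of_mul_eq_one_right z hxy)
  · exact .inr ⟨n, by simpa using hx⟩

theorem CategoryTheory.isIso_of_comp_eq_id_of_forall_idempotent {C : Type*} [Category C]
    [Limits.HasZeroMorphisms C] {X Y : C} (hX : ¬ Limits.IsZero X)
    (hY : ∀ e : Y ⟶ Y, e ≫ e = e → e = 0 ∨ e = 𝟙 Y) {f : X ⟶ Y} {r : Y ⟶ X}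
    (hfr : f ≫ r = 𝟙 X) : IsIso f := by
  have he : (r ≫ f) ≫ (r ≫ f) = r ≫ f := by
    rw [Category.assoc, ← Category.assoc f, hfr, Category.id_comp]
  rcases hY _ he with h | h
  · refine absurd ((Limits.IsZero.iff_id_eq_zero X).mpr ?_) hX
    calc 𝟙 X = f ≫ (r ≫ f) ≫ r := by simp [hfr]
      _ = 0 := by rw [h, Limits.zero_comp, Limits.comp_zero]
  · exact ⟨r, hfr, h⟩

namespace FDRep

variable {k G : Type u} [Field k] [Monoid G]

instance (M : FDRep k G) : IsArtinianRing (End M) :=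
  have : FiniteDimensional k (End M) := inferInstanceAs (FiniteDimensional k (M ⟶ M))
  .of_finite k (End M)

def endToModuleEnd (M : FDRep k G) : End M →+* Module.End k M where
  toFun v := v.hom.hom.hom
  map_one' := rfl
  map_mul' _ _ := rfl
  map_zero' := rfl
  map_add' _ _ := rfl

theorem trace_eq_zero_of_not_isUnit {M : FDRep k G} (hM : Indec M) {v : End M}
    (hv : ¬ IsUnit v) : LinearMap.trace k M v.hom.hom.hom = 0 := by
  have hnil := (isUnit_or_isNilpotent_of_forall_isIdempotentElem hM.2 v).resolve_left hv
  exact isNilpotent_iff_eq_zero.mp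
    (LinearMap.isNilpotent_trace_of_isNilpotent (hnil.map (endToModuleEnd M)))

theorem trace_comp_eq_of_negligible_sub {M N : FDRep k G} {u v : M ⟶ N}
    (huv : Negligible (u - v)) (h : N ⟶ M) :
    LinearMap.trace k M (u ≫ h).hom.hom.hom = LinearMap.trace k M (v ≫ h).hom.hom.hom := by
  have h_sub := huv h
  rw [Preadditive.sub_comp] at h_sub
  rwa [← sub_eq_zero, ← map_sub]

theorem isIso_of_negligible_sub_id {M : FDRep k G} (hM : Indec M)
    (hMnz : ¬ Negligible (𝟙 M)) {u : M ⟶ M} (hu : Negligible (u - 𝟙 M)) : IsIso u := by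
  refine (isUnit_iff_isIso (X := M) u).mp (by_contra fun hnu ↦ hMnz fun (h : End M) ↦ ?_)
  rw [← trace_comp_eq_of_negligible_sub hu h]
  exact trace_eq_zero_of_not_isUnit hM (v := h * (show End M from u)) fun hhu ↦
    hnu (isUnit_of_mul_isUnit_right hhu)

end FDRep

theorem stmt_10_general {k G : Type u} [Field k] [Group G]
    (M N : FDRep k G) (hM : Indec M) (hN : Indec N)
    (f : M ⟶ N) (g : N ⟶ M)
    (hfg : Negligible (f ≫ g - 𝟙 M))
    (hMnz : ¬ Negligible (𝟙 M)) :
    Nonempty (M ≅ N) := by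
  have := FDRep.isIso_of_negligible_sub_id hM hMnz hfg
  have hsplit : f ≫ g ≫ inv (f ≫ g) = 𝟙 M := by rw [← Category.assoc, IsIso.hom_inv_id]
  have := isIso_of_comp_eq_id_of_forall_idempotent hM.1 hN.2 hsplit
  exact ⟨asIso f⟩

/-- Let `k` be a splitting field for the finite group `G` and `M`, `N` indecomposable
finite-dimensional `kG`-modules.  If the images of `M` and `N` in the semisimplification
of `Rep_k G` are isomorphic (via morphisms `f`, `g` that are mutually inverse modulo
negligible morphisms) and nonzero, then `M ≅ N`. -/
theorem stmt_10 {k G : Type u} [Field k] [Group G] [Finite G]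
    (hsplit : IsSplittingFieldFor k G)
    (M N : FDRep k G) (hM : Indec M) (hN : Indec N)
    (f : M ⟶ N) (g : N ⟶ M)
    (hfg : Negligible (f ≫ g - 𝟙 M)) (hgf : Negligible (g ≫ f - 𝟙 N))
    (hMnz : ¬ Negligible (𝟙 M)) :
    Nonempty (M ≅ N) :=
  stmt_10_general M N hM hN f g hfg hMnz
end

section
/- Let k be a splitting field for the finite group G of characteristic p > 0, and M an indecomposable finite-dimensional kG-module. Then the image of M in the semisimplification of Rep_k G is zero if and only if p divides dim_k M. -/
open CategoryTheory

universe u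

/-!
If `M` is indecomposable, the finite-dimensional algebra `End M` has no idempotents other
than `0` and `1`, so each of its elements is a unit or nilpotent: factoring the minimal
polynomial as `X ^ a * q` with `X ∤ q` turns a Bézout relation between `X ^ (a + 1)` and `q`
into an idempotent. Over a splitting field every `g : End M` is therefore a scalar `c` plus a
nilpotent, so `tr g = (dim M) c`, and all these traces vanish iff `dim M = 0` in `k`.
-/

open Polynomial in
theorem isUnit_or_isNilpotent_of_isIntegral {k A : Type*} [Field k] [Ring A] [Algebra k A]
    (hidem : ∀ e : A, IsIdempotentElem e → e = 0 ∨ e = 1) {f : A} (hf : IsIntegral k f) :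
    IsUnit f ∨ IsNilpotent f := by
  set m := minpoly k f
  obtain ⟨q, hmq, hq⟩ := m.exists_eq_pow_rootMultiplicity_mul_and_not_dvd (minpoly.ne_zero hf) 0
  set a := m.rootMultiplicity 0
  simp only [map_zero, sub_zero] at hmq hq
  -- Using `X ^ (a + 1)` rather than `X ^ a`, `e = 0` makes `f` a unit even when `a = 0`.
  obtain ⟨u, v, huv⟩ : IsCoprime ((X : k[X]) ^ (a + 1)) q :=
    ((irreducible_X.coprime_iff_not_dvd).mpr hq).pow_left
  set e := aeval f (v * q)
  have hsum : aeval f u * f ^ (a + 1) + e = 1 := by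
    rw [← map_one (aeval (R := k) f), ← huv, map_add, map_mul (aeval f) u, map_pow, aeval_X]
  have hkill : f ^ (a + 1) * e = 0 :=
    calc f ^ (a + 1) * e = aeval f (X ^ (a + 1) * (v * q)) := by rw [map_mul, map_pow, aeval_X]
      _ = aeval f (X * v * m) := by rw [hmq]; ring_nf
      _ = 0 := by rw [map_mul, minpoly.aeval, mul_zero]
  have he : IsIdempotentElem e :=
    calc e * e = (aeval f u * f ^ (a + 1) + e) * e - aeval f u * (f ^ (a + 1) * e) := by
          noncomm_ring
      _ = e := by rw [hsum, hkill, one_mul, mul_zero, sub_zero]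
  rcases hidem e he with he0 | he1
  · rw [he0, add_zero] at hsum
    have hcomm : Commute (aeval f u) (f ^ (a + 1)) := by
      simpa only [map_pow, aeval_X] using (Commute.all u (X ^ (a + 1))).map (aeval f)
    have hunit : IsUnit (f ^ (a + 1)) := (hcomm.isUnit_mul_iff.mp (hsum ▸ isUnit_one)).2
    exact .inl ((isUnit_pow_iff a.succ_ne_zero).mp hunit)
  · exact .inr ⟨a + 1, by rwa [he1, mul_one] at hkill⟩

theorem LinearMap.trace_eq_finrank_mul_of_isNilpotent_sub_algebraMap {k V : Type*} [Field k]
    [AddCommGroup V] [Module k V] [FiniteDimensional k V] {φ : Module.End k V} {c : k}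
    (h : IsNilpotent (φ - algebraMap k (Module.End k V) c)) :
    LinearMap.trace k V φ = Module.finrank k V * c := by
  have := (LinearMap.isNilpotent_trace_of_isNilpotent h).eq_zero
  rw [map_sub, sub_eq_zero] at this
  rw [this, Module.algebraMap_end_eq_smul_id, map_smul, LinearMap.trace_id, smul_eq_mul, mul_comm]

namespace FDRep

variable {k G : Type u} [Field k] [Monoid G]

def endToLinearEnd (M : FDRep k G) : End M →ₐ[k] Module.End k M where
  toFun f := f.hom.hom.hom
  map_one' := rfl
  map_mul' _ _ := rfl
  map_zero' := rfl
  map_add' _ _ := rfl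
  commutes' _ := rfl

instance (M : FDRep k G) : Module.Finite k (End M) :=
  inferInstanceAs (Module.Finite k (M ⟶ M))

theorem negligible_id_iff {M : FDRep k G} :
    Negligible (𝟙 M) ↔ ∀ g : End M, LinearMap.trace k M (endToLinearEnd M g) = 0 := by
  simp only [Negligible, Category.id_comp]; rfl

end FDRep

theorem Indec.exists_isNilpotent_sub_algebraMap {k G : Type u} [Field k] [Monoid G]
    (hsplit : IsSplittingFieldFor k G) {M : FDRep k G} (hM : Indec M) (g : End M) :
    ∃ c : k, IsNilpotent (g - algebraMap k (End M) c) := by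
  obtain ⟨c, hc⟩ := hsplit M hM g
  exact ⟨c, (isUnit_or_isNilpotent_of_isIntegral (fun (e : End M) he => hM.2 e he)
    (IsIntegral.of_finite k _)).resolve_left hc⟩

theorem stmt_11_general {k G : Type u} [Field k] [Group G]
    (p : ℕ) [CharP k p]
    (hsplit : IsSplittingFieldFor k G)
    (M : FDRep k G) (hM : Indec M) :
    Negligible (𝟙 M) ↔ p ∣ Module.finrank k M := by
  rw [FDRep.negligible_id_iff, ← CharP.cast_eq_zero_iff k p]
  refine ⟨fun h => ?_, fun hdim g => ?_⟩
  · simpa only [map_one, LinearMap.trace_one] using h 1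
  · obtain ⟨c, hc⟩ := hM.exists_isNilpotent_sub_algebraMap hsplit g
    rw [LinearMap.trace_eq_finrank_mul_of_isNilpotent_sub_algebraMap (c := c), hdim, zero_mul]
    simpa only [map_sub, AlgHom.commutes] using hc.map M.endToLinearEnd

/-- Let `k` be a splitting field of characteristic `p > 0` for the finite group `G`, and
`M` an indecomposable finite-dimensional `kG`-module.  Then the image of `M` in the
semisimplification of `Rep_k G` is zero (i.e. `𝟙 M` is negligible) if and only if `p`
divides `dim_k M`. -/
theorem stmt_11 {k G : Type u} [Field k] [Group G] [Finite G]
    (p : ℕ) [CharP k p] (hp : p ≠ 0)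
    (hsplit : IsSplittingFieldFor k G)
    (M : FDRep k G) (hM : Indec M) :
    Negligible (𝟙 M) ↔ p ∣ Module.finrank k M :=
  stmt_11_general p hsplit M hM
end
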